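/- Let p ≡ 1 (mod 4) be prime and (a,p) = 1. Define S(y) = ∑_{μ=0}^{p-1} ∑_{ν=0}^{p-1} μ χ(ν) ⌊(aμ + ay + ν)/p⌋ for real y. Then S(y) ≡ 0 (mod p) for all real y. -/

import Mathlib

/-!
Write `b = ⌊ay⌋` and `F(c) = ∑_{μ<p} μ ⌊(aμ + c)/p⌋`, so that `S(y) = ∑_ν χ(ν) F(b + ν)`.
Raising `c` by one changes only the term with `aμ + c + 1 ≡ 0 (mod p)`, by `μ ≡ -(c + 1)/a`,
so modulo `p` the map `ν ↦ F(b + ν)` is a quadratic polynomial in `ν`. By Euler's criterion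
`χ(ν) ≡ ν^((p-1)/2)`, and `∑_ν ν^k ≡ 0 (mod p)` for `k < p - 1`; hence `∑_ν χ(ν) ν^j ≡ 0` for
`j ≤ 2` as soon as `p > 5`.
-/

/-- `S(y) = ∑_{μ,ν mod p} μ χ(ν) ⌊(aμ + ay + ν)/p⌋`. -/
noncomputable def Ssum (p : ℕ) [Fact p.Prime] (a : ℤ) (y : ℝ) : ℤ :=
  ∑ μ ∈ Finset.range p, ∑ ν ∈ Finset.range p,
    (μ : ℤ) * legendreSym p ν * ⌊(((a : ℝ) * μ + a * y + ν) / p)⌋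

open Finset

theorem Int.add_one_ediv_eq (n : ℤ) {p : ℤ} (hp : 0 < p) :
    (n + 1) / p = n / p + if p ∣ n + 1 then 1 else 0 := by
  have hr0 := Int.emod_nonneg n hp.ne'
  have hrp := Int.emod_lt_of_pos n hp
  have hn : n + 1 = (n % p + 1) + p * (n / p) := by rw [add_right_comm, Int.emod_add_mul_ediv]
  rw [hn, Int.add_mul_ediv_left _ _ hp.ne', add_comm (_ / p)]
  simp only [Int.dvd_add_left (dvd_mul_right _ _)]
  congr 1
  rcases (Int.add_one_le_iff.mpr hrp).eq_or_lt with h | h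
  · rw [h, Int.ediv_self hp.ne', if_pos dvd_rfl]
  · rw [Int.ediv_eq_zero_of_lt (by omega) h,
      if_neg fun hd => (Int.le_of_dvd (by omega) hd).not_gt h]

theorem ZMod.sum_range_natCast {n : ℕ} [NeZero n] {M : Type*} [AddCommMonoid M]
    (f : ZMod n → M) : ∑ i ∈ range n, f i = ∑ x : ZMod n, f x :=
  sum_nbij' (↑) ZMod.val (fun _ _ => mem_univ _) (fun x _ => mem_range.mpr x.val_lt)
    (fun _ hi => ZMod.val_cast_of_lt (mem_range.mp hi)) (fun x _ => ZMod.natCast_zmod_val x)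
    (fun _ _ => rfl)

theorem sum_range_legendreSym_mul_pow_eq_zero (p : ℕ) [Fact p.Prime] {k : ℕ}
    (hk : p / 2 + k < p - 1) :
    ∑ ν ∈ range p, (legendreSym p ν : ZMod p) * (ν : ZMod p) ^ k = 0 := by
  simp only [legendreSym.eq_pow, Int.cast_natCast, ← pow_add]
  rw [ZMod.sum_range_natCast (fun x => x ^ (p / 2 + k))]
  exact FiniteField.sum_pow_lt_card_sub_one (K := ZMod p) _ (by rwa [ZMod.card])

theorem sum_range_legendreSym_mul_quadratic_eq_zero (p : ℕ) [Fact p.Prime]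
    (hp : p / 2 + 2 < p - 1) (α β γ : ZMod p) :
    ∑ ν ∈ range p, (legendreSym p ν : ZMod p) * (α + β * ν + γ * ν ^ 2) = 0 := by
  have hχ (k : ℕ) (hk : k ≤ 2) := sum_range_legendreSym_mul_pow_eq_zero p (k := k) (by omega)
  calc ∑ ν ∈ range p, (legendreSym p ν : ZMod p) * (α + β * ν + γ * ν ^ 2)
      = α * ∑ ν ∈ range p, (legendreSym p ν : ZMod p) * (ν : ZMod p) ^ 0
        + β * ∑ ν ∈ range p, (legendreSym p ν : ZMod p) * (ν : ZMod p) ^ 1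
        + γ * ∑ ν ∈ range p, (legendreSym p ν : ZMod p) * (ν : ZMod p) ^ 2 := by
        simp only [mul_sum, ← sum_add_distrib]
        exact sum_congr rfl fun ν _ => by ring
    _ = 0 := by rw [hχ 0 (by omega), hχ 1 (by omega), hχ 2 le_rfl]; ring

def floorMoment (p : ℕ) (a c : ℤ) : ℤ :=
  ∑ μ ∈ range p, μ * ((a * μ + c) / p)

theorem Ssum_eq_sum_legendreSym_mul_floorMoment (p : ℕ) [Fact p.Prime] (a : ℤ) (y : ℝ) :
    Ssum p a y = ∑ ν ∈ range p, legendreSym p ν * floorMoment p a (⌊a * y⌋ + ν) := by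
  rw [Ssum, sum_comm]
  refine sum_congr rfl fun ν _ => ?_
  rw [floorMoment, mul_sum]
  refine sum_congr rfl fun μ _ => ?_
  have hfloor : ⌊((a : ℝ) * μ + a * y + ν) / p⌋ = (a * μ + (⌊a * y⌋ + ν)) / p := by
    rw [Int.floor_div_natCast, show (a : ℝ) * μ + a * y + ν = a * y + ((a * μ + ν : ℤ) : ℝ) by
      push_cast; ring, Int.floor_add_intCast]
    ring_nf
  rw [hfloor]
  ring

section floorMoment

variable {p : ℕ} [Fact p.Prime] {a : ℤ}

theorem floorMoment_add_one_sub (ha : (a : ZMod p) ≠ 0) (c : ℤ) :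
    ((floorMoment p a (c + 1) - floorMoment p a c : ℤ) : ZMod p) = -(c + 1) / a := by
  have hp : (0 : ℤ) < p := by exact_mod_cast (Fact.out : p.Prime).pos
  have hstep : floorMoment p a (c + 1) - floorMoment p a c
      = ∑ μ ∈ range p, if (p : ℤ) ∣ a * μ + c + 1 then (μ : ℤ) else 0 := by
    rw [floorMoment, floorMoment, ← sum_sub_distrib]
    refine sum_congr rfl fun μ _ => ?_
    rw [← add_assoc, Int.add_one_ediv_eq _ hp]
    split_ifs <;> ring
  have hroot (x : ZMod p) : (a * x + c + 1 = 0) ↔ x = -(c + 1) / a := by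
    rw [eq_div_iff ha, add_assoc, add_eq_zero_iff_eq_neg, mul_comm]
  rw [hstep]
  push_cast
  simp only [← ZMod.intCast_zmod_eq_zero_iff_dvd]
  push_cast
  have : NeZero p := ⟨(Fact.out : p.Prime).ne_zero⟩
  rw [ZMod.sum_range_natCast (fun x => if (a : ZMod p) * x + (c : ZMod p) + 1 = 0 then x else 0)]
  simp only [hroot, sum_ite_eq', mem_univ, if_true]

theorem two_mul_floorMoment_add_natCast (ha : (a : ZMod p) ≠ 0) (c : ℤ) (ν : ℕ) :
    2 * (floorMoment p a (c + ν) : ZMod p)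
      = 2 * floorMoment p a c - (2 * c * ν + ν ^ 2 + ν) / a := by
  induction ν with
  | zero => simp
  | succ ν ih =>
    have hstep := floorMoment_add_one_sub ha (c + ν)
    push_cast at hstep ⊢
    rw [← add_assoc]
    linear_combination ih + 2 * hstep

end floorMoment

theorem Ssum_dvd (p : ℕ) [Fact p.Prime] (h4 : p % 4 = 1) (h5 : p ≠ 5)
    (a : ℤ) (ha : Int.gcd a p = 1) (y : ℝ) :
    (p : ℤ) ∣ Ssum p a y := by
  have hp1 := (Fact.out : p.Prime).one_lt
  have ha0 : (a : ZMod p) ≠ 0 := by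
    rw [Ne, ZMod.intCast_zmod_eq_zero_iff_dvd]
    intro h
    have := Int.gcd_eq_right (by positivity) h
    omega
  have h2 : (2 : ZMod p) ≠ 0 := Ring.two_ne_zero (by rw [ZMod.ringChar_zmod_n]; omega)
  set b := ⌊a * y⌋
  rw [← ZMod.intCast_zmod_eq_zero_iff_dvd, Ssum_eq_sum_legendreSym_mul_floorMoment]
  refine (mul_eq_zero.mp ?_).resolve_left h2
  push_cast
  rw [mul_sum]
  calc ∑ ν ∈ range p, 2 * ((legendreSym p ν : ZMod p) * (floorMoment p a (b + ν) : ZMod p))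
      = ∑ ν ∈ range p, (legendreSym p ν : ZMod p)
          * (2 * floorMoment p a b + (-(2 * b + 1) / a) * ν + (-1 / a) * ν ^ 2) :=
        sum_congr rfl fun ν _ => by rw [mul_left_comm, two_mul_floorMoment_add_natCast ha0]; ring
    _ = 0 := sum_range_legendreSym_mul_quadratic_eq_zero p (by omega) _ _ _
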